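/- Define c_{k,ℓ} = ((-1)^ℓ/ℓ!) ((k+1)!/(k+1-ℓ)!)^2 for integers k ≥ -1 and 0 ≤ ℓ ≤ k+1. Then c_{k,ℓ} = c_{k-1,ℓ} - (2k+1) c_{k-1,ℓ-1} - k^2 c_{k-2,ℓ-2} for all k ≥ 1 and ℓ ≥ 2 with ℓ ≤ k+1. -/

import Mathlib

/-
With `N = k + 1`, `N! / (N - ℓ)!` is the descending factorial `N.descFactorial ℓ`, which vanishes
for `ℓ > N`; so `c` agrees with `(-1)^ℓ / ℓ! * (N.descFactorial ℓ)^2` on all of `ℕ × ℕ`, zero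
extension included. Peeling off `N.descFactorial (ℓ + 1) = (N - ℓ) * N.descFactorial ℓ`, the
recurrence reduces, after division by `(N-1)^2 ((N-2).descFactorial (ℓ-2))^2`, to the polynomial
identity `N^2 = (N - ℓ)^2 + (2N - 1) ℓ - ℓ (ℓ - 1)`.
-/

/-- `c_{k,ℓ} = ((-1)^ℓ/ℓ!)((k+1)!/(k+1-ℓ)!)²` for `0 ≤ ℓ ≤ k+1`, extended by `0`
outside this range. -/
def c (k ℓ : ℤ) : ℚ :=
  if 0 ≤ ℓ ∧ ℓ ≤ k + 1 then
    (-1 : ℚ)^ℓ.toNat / (Nat.factorial ℓ.toNat) *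
      ((Nat.factorial (k+1).toNat : ℚ) / (Nat.factorial (k+1-ℓ).toNat))^2
  else 0

theorem Nat.cast_descFactorial_succ {R : Type*} [Ring R] (n k : ℕ) :
    (n.descFactorial (k + 1) : R) = n.descFactorial k * (n - k) := by
  rw [← descPochhammer_eval_eq_descFactorial, ← descPochhammer_eval_eq_descFactorial,
    descPochhammer_succ_eval]

/-- `cDesc N ℓ = c_{N-1,ℓ}`, indexed by `N = k + 1` so that both indices are natural numbers. -/
def cDesc (N ℓ : ℕ) : ℚ :=
  (-1) ^ ℓ / ℓ.factorial * (N.descFactorial ℓ : ℚ) ^ 2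

theorem c_eq_cDesc {k ℓ : ℤ} {N l : ℕ} (hk : k + 1 = N) (hℓ : ℓ = l) : c k ℓ = cDesc N l := by
  subst hℓ
  unfold c cDesc
  rcases le_or_gt l N with hlN | hNl
  · rw [if_pos (by omega), hk, show ((N : ℤ) - l).toNat = N - l by omega, Int.toNat_natCast,
      Int.toNat_natCast, ← Nat.factorial_mul_descFactorial hlN, Nat.cast_mul,
      mul_div_cancel_left₀ _ (by positivity)]
  · rw [if_neg (by omega), Nat.descFactorial_of_lt hNl]
    simp

theorem cDesc_recurrence (n l : ℕ) :
    cDesc (n + 2) (l + 2) =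
      cDesc (n + 1) (l + 2) - (2 * n + 3) * cDesc (n + 1) (l + 1) - (n + 1) ^ 2 * cDesc n l := by
  unfold cDesc
  simp only [Nat.succ_descFactorial_succ, Nat.factorial_succ]
  push_cast
  rw [Nat.cast_descFactorial_succ]
  field_simp
  ring

theorem c_recurrence_general (k ℓ : ℤ) (hk : 1 ≤ k) (hl : 2 ≤ ℓ) :
    c k ℓ = c (k-1) ℓ - (2*(k : ℚ)+1) * c (k-1) (ℓ-1) - (k : ℚ)^2 * c (k-2) (ℓ-2) := by
  obtain ⟨n, rfl⟩ : ∃ n : ℕ, k = n + 1 := ⟨(k - 1).toNat, by omega⟩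
  obtain ⟨l, rfl⟩ : ∃ l : ℕ, ℓ = l + 2 := ⟨(ℓ - 2).toNat, by omega⟩
  rw [c_eq_cDesc (N := n + 2) (l := l + 2) (by omega) (by omega),
    c_eq_cDesc (N := n + 1) (l := l + 2) (by omega) (by omega),
    c_eq_cDesc (N := n + 1) (l := l + 1) (by omega) (by omega),
    c_eq_cDesc (N := n) (l := l) (by omega) (by omega), cDesc_recurrence]
  push_cast
  ring

/-- `c_{k,ℓ} = c_{k-1,ℓ} - (2k+1) c_{k-1,ℓ-1} - k² c_{k-2,ℓ-2}` for `k ≥ 1` and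
`2 ≤ ℓ ≤ k+1`. -/
theorem c_recurrence (k ℓ : ℤ) (hk : 1 ≤ k) (hl : 2 ≤ ℓ) (hlk : ℓ ≤ k + 1) :
    c k ℓ = c (k-1) ℓ - (2*(k : ℚ)+1) * c (k-1) (ℓ-1) - (k : ℚ)^2 * c (k-2) (ℓ-2) :=
  c_recurrence_general k ℓ hk hl
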